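/- Let K be a circularly ordered set whose circular topology is compact and L a linearly ordered set whose order (interval) topology is compact. Define the lexicographic circular order on K × L by declaring, for pairwise distinct triples, [(a,x),(b,y),(c,z)] iff one of the following holds: (i) sbtw a b c in K; (ii) a = b ≠ c and x < y; (iii) b = c ≠ a and y < z; (iv) c = a ≠ b and z < x; (v) a = b = c and (x < y < z or y < z < x or z < x < y). Then K × L, equipped with the circular topology of this lexicographic circular order, is compact. -/

import Mathlib

/-!
Compactness is tested on ultrafilters. Let `F` be an ultrafilter on `K × L` and `k` a limit of its
image in `K`. If `F` lives on the fibre over `k`, it converges to `(k, l)` for a limit `l` of its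
image in `L`, because `t ↦ (k, t)` is continuous. Otherwise the image of `F` approaches `k` from
one side only: it contains every arc `(b, k)`, or every arc `(k, b)`. In the first case `F`
converges to `(k, min L)`, because a closed interval missing this point either has no endpoint over
`k`, and then misses everything over a neighbourhood of `k`, or lies inside the fibre over `k`, or
leaves that fibre forwards and so misses everything over some arc `(b, k)`. The second case is
symmetric, with `(k, max L)`.
-/

/-- The closed interval `{x | R a x b} ∪ {a, b}` of a ternary relation `R`. -/
def ternIcc {X : Type*} (R : X → X → X → Prop) (a b : X) : Set X :=
  {x | R a x b} ∪ {a, b}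

/-- The interval topology of a ternary (circular-order-like) relation `R`: the topology
generated by the complements of the closed intervals. -/
def ternaryTopology {X : Type*} (R : X → X → X → Prop) : TopologicalSpace X :=
  TopologicalSpace.generateFrom {s : Set X | ∃ a b : X, s = (ternIcc R a b)ᶜ}

/-- The circular (interval) topology of a circular order. -/
def circularTopology (X : Type*) [CircularOrder X] : TopologicalSpace X :=
  ternaryTopology (fun a b c : X => sbtw a b c)

/-- The strict betweenness relation of the lexicographic circular order on the product
`K × L` of a circularly ordered set `K` and a linearly ordered set `L`. -/
def lexSbtw (K L : Type*) [CircularOrder K] [LinearOrder L] :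
    K × L → K × L → K × L → Prop := fun p q r =>
  p ≠ q ∧ q ≠ r ∧ r ≠ p ∧
    (sbtw p.1 q.1 r.1 ∨
      (p.1 = q.1 ∧ q.1 ≠ r.1 ∧ p.2 < q.2) ∨
      (q.1 = r.1 ∧ r.1 ≠ p.1 ∧ q.2 < r.2) ∨
      (r.1 = p.1 ∧ p.1 ≠ q.1 ∧ r.2 < p.2) ∨
      (p.1 = q.1 ∧ q.1 = r.1 ∧
        ((p.2 < q.2 ∧ q.2 < r.2) ∨ (q.2 < r.2 ∧ r.2 < p.2) ∨ (r.2 < p.2 ∧ p.2 < q.2))))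

open Set Filter Topology

attribute [local instance] circularTopology

section TernaryTopology

variable {X : Type*} {R : X → X → X → Prop}

lemma mem_ternIcc {a b p : X} : p ∈ ternIcc R a b ↔ R a p b ∨ p = a ∨ p = b := by
  simp only [ternIcc, mem_union, mem_ofPred_eq, mem_insert_iff, mem_singleton_iff]

lemma mem_compl_ternIcc {a b p : X} : p ∈ (ternIcc R a b)ᶜ ↔ ¬ R a p b ∧ p ≠ a ∧ p ≠ b := by
  simp only [mem_compl_iff, mem_ternIcc, not_or, ne_eq]

lemma isOpen_compl_ternIcc (a b : X) : IsOpen[ternaryTopology R] (ternIcc R a b)ᶜ :=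
  TopologicalSpace.isOpen_generateFrom_of_mem ⟨a, b, rfl⟩

lemma le_nhds_ternaryTopology {F : Filter X} {q : X}
    (h : ∀ a b, q ∉ ternIcc R a b → (ternIcc R a b)ᶜ ∈ F) :
    F ≤ @nhds X (ternaryTopology R) q :=
  TopologicalSpace.tendsto_nhds_generateFrom_iff.2 <| by
    rintro _ ⟨a, b, rfl⟩ hq
    exact h a b hq

end TernaryTopology

section Circular

variable {K : Type*} [CircularOrder K]

lemma ternIcc_sbtw_self (a : K) : ternIcc sbtw a a = {a} := by
  ext; simp [ternIcc, sbtw_irrefl_left_right]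

lemma compl_ternIcc_sbtw {a b : K} (hab : a ≠ b) : (ternIcc sbtw a b)ᶜ = cIoo b a := by
  ext x
  rw [mem_compl_ternIcc, mem_cIoo]
  refine ⟨fun ⟨hx, hxa, hxb⟩ => ?_, fun h => ⟨sbtw_asymm h, ?_, ?_⟩⟩
  · rw [sbtw_iff_not_btw]
    intro h
    rcases h.antisymm (btw_iff_not_sbtw.2 hx) with h | h | h
    exacts [hxa h.symm, hxb h, hab h.symm]
  · rintro rfl; exact sbtw_irrefl_right h
  · rintro rfl; exact sbtw_irrefl_left h

lemma isOpen_cIoo (a b : K) : IsOpen (cIoo a b) := by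
  rcases eq_or_ne a b with rfl | hab
  · simp [cIoo, sbtw_irrefl_left_right]
  · rw [← compl_ternIcc_sbtw hab.symm]
    exact isOpen_compl_ternIcc b a

instance t1Space_circularTopology : T1Space K where
  t1 a := by
    rw [← ternIcc_sbtw_self, ← isOpen_compl_iff]
    exact isOpen_compl_ternIcc a a

lemma sbtw_or_sbtw_of_ne {a b x : K} (hxa : x ≠ a) (hxb : x ≠ b) (hab : a ≠ b) :
    sbtw a x b ∨ sbtw b x a :=
  or_iff_not_imp_left.2 fun h => by
    simpa only [compl_ternIcc_sbtw hab, mem_cIoo] using mem_compl_ternIcc.2 ⟨h, hxa, hxb⟩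

lemma cIoo_inter_cIoo_subset (b₁ b₂ k : K) : cIoo b₁ k ∩ cIoo k b₂ ⊆ cIoo b₁ b₂ :=
  fun _ ⟨h₁, h₂⟩ => (sbtw_trans_right h₂.cyclic_left h₁.cyclic_left).cyclic_left.cyclic_left

lemma mem_cIoo_of_cIoo_inter_cIoo_nonempty {b₁ b₂ k : K}
    (h : (cIoo b₁ k ∩ cIoo k b₂).Nonempty) : k ∈ cIoo b₂ b₁ :=
  let ⟨_, h₁, h₂⟩ := h
  (SBtw.sbtw.trans_left h₁ h₂.cyclic_left).cyclic_left

lemma Ultrafilter.not_cIoo_mem_and_cIoo_mem (G : Ultrafilter K) {k : K} (hG : ↑G ≤ 𝓝 k)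
    (b₁ b₂ : K) : ¬ (cIoo b₁ k ∈ G ∧ cIoo k b₂ ∈ G) := by
  rintro ⟨h₁, h₂⟩
  have hk : k ∈ cIoo b₂ b₁ :=
    mem_cIoo_of_cIoo_inter_cIoo_nonempty (G.nonempty_of_mem (inter_mem h₁ h₂))
  obtain ⟨c, hc, hc'⟩ := G.nonempty_of_mem
    (inter_mem (inter_mem h₁ h₂) (hG ((isOpen_cIoo b₂ b₁).mem_nhds hk)))
  exact sbtw_asymm (cIoo_inter_cIoo_subset b₁ b₂ k hc) hc'

lemma Ultrafilter.cIoo_mem_left_or_right (G : Ultrafilter K) {k : K} (hG : ↑G ≤ 𝓝 k)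
    (hk : {k}ᶜ ∈ G) : (∀ b ≠ k, cIoo b k ∈ G) ∨ ∀ b ≠ k, cIoo k b ∈ G := by
  have hsplit (b : K) (hb : b ≠ k) : cIoo b k ∈ G ∨ cIoo k b ∈ G :=
    Ultrafilter.union_mem_iff.1 <| mem_of_superset
      (inter_mem hk (hG (compl_singleton_mem_nhds hb.symm)))
      fun _ ⟨hck, hcb⟩ => sbtw_or_sbtw_of_ne hcb hck hb
  by_contra! h
  obtain ⟨⟨b₁, hb₁, h₁⟩, b₂, hb₂, h₂⟩ := h
  exact G.not_cIoo_mem_and_cIoo_mem hG b₂ b₁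
    ⟨(hsplit b₂ hb₂).resolve_right h₂, (hsplit b₁ hb₁).resolve_left h₁⟩

end Circular

section Lex

variable {K L : Type*} [CircularOrder K] [LinearOrder L]

lemma mem_ternIcc_lexSbtw_of_fst_ne {a b : K} {x y : L} {p : K × L} (ha : p.1 ≠ a)
    (hb : p.1 ≠ b) :
    p ∈ ternIcc (lexSbtw K L) (a, x) (b, y) ↔ sbtw a p.1 b ∨ (b = a ∧ y < x) := by
  obtain ⟨c, t⟩ := p
  simp only [mem_ternIcc, lexSbtw, Prod.ext_iff]
  grind [sbtw_irrefl_left_right]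

lemma preimage_prodMk_ternIcc_lexSbtw_of_le (k : K) {x y : L} (hxy : x ≤ y) :
    Prod.mk k ⁻¹' ternIcc (lexSbtw K L) (k, x) (k, y) = Icc x y := by
  ext t
  simp only [mem_preimage, mem_ternIcc, lexSbtw, Prod.ext_iff, mem_Icc]
  grind [sbtw_irrefl_left_right]

lemma preimage_prodMk_ternIcc_lexSbtw_of_lt (k : K) {x y : L} (hyx : y < x) :
    Prod.mk k ⁻¹' ternIcc (lexSbtw K L) (k, x) (k, y) = Iic y ∪ Ici x := by
  ext t
  simp only [mem_preimage, mem_ternIcc, lexSbtw, Prod.ext_iff, mem_union, mem_Iic, mem_Ici]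
  grind [sbtw_irrefl_left_right]

lemma preimage_prodMk_ternIcc_lexSbtw_left {k b : K} (hkb : k ≠ b) (x y : L) :
    Prod.mk k ⁻¹' ternIcc (lexSbtw K L) (k, x) (b, y) = Ici x := by
  ext t
  simp only [mem_preimage, mem_ternIcc, lexSbtw, Prod.ext_iff, mem_Ici]
  grind [sbtw_irrefl_left]

lemma preimage_prodMk_ternIcc_lexSbtw_right {a k : K} (hak : a ≠ k) (x y : L) :
    Prod.mk k ⁻¹' ternIcc (lexSbtw K L) (a, x) (k, y) = Iic y := by
  ext t
  simp only [mem_preimage, mem_ternIcc, lexSbtw, Prod.ext_iff, mem_Iic]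
  grind [sbtw_irrefl_right]


lemma fst_preimage_compl_ternIcc_subset {a b : K} {x y : L} (h : ¬ (b = a ∧ y < x)) :
    Prod.fst ⁻¹' (ternIcc sbtw a b)ᶜ ⊆ (ternIcc (lexSbtw K L) (a, x) (b, y))ᶜ := by
  intro p hp hmem
  obtain ⟨hp, ha, hb⟩ := mem_compl_ternIcc.1 hp
  exact ((mem_ternIcc_lexSbtw_of_fst_ne ha hb).1 hmem).elim hp h

lemma compl_ternIcc_lexSbtw_mem_of_tendsto_fst {F : Filter (K × L)} {k : K} {l : L}
    (hF : Tendsto Prod.fst F (𝓝 k)) {a b : K} {x y : L} (ha : a ≠ k) (hb : b ≠ k)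
    (hq : (k, l) ∉ ternIcc (lexSbtw K L) (a, x) (b, y)) :
    (ternIcc (lexSbtw K L) (a, x) (b, y))ᶜ ∈ F := by
  rw [mem_ternIcc_lexSbtw_of_fst_ne ha.symm hb.symm, not_or] at hq
  have hk : k ∈ (ternIcc sbtw a b)ᶜ := mem_compl_ternIcc.2 ⟨hq.1, ha.symm, hb.symm⟩
  exact mem_of_superset (hF ((isOpen_compl_ternIcc a b).mem_nhds hk))
    (fst_preimage_compl_ternIcc_subset hq.2)

lemma compl_ternIcc_lexSbtw_mem_of_fst_ne {F : Filter (K × L)} {k : K}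
    (hk : {k}ᶜ ∈ F.map Prod.fst) {x y : L} (hyx : ¬ y < x) :
    (ternIcc (lexSbtw K L) (k, x) (k, y))ᶜ ∈ F := by
  refine mem_of_superset hk ?_
  rw [← ternIcc_sbtw_self]
  exact fst_preimage_compl_ternIcc_subset fun h => hyx h.2

lemma le_nhds_lexSbtw_of_isBot {F : Filter (K × L)} {k : K} {l : L} (hl : IsBot l)
    (hF : Tendsto Prod.fst F (𝓝 k)) (hk : {k}ᶜ ∈ F.map Prod.fst)
    (hleft : ∀ b ≠ k, cIoo b k ∈ F.map Prod.fst) :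
    F ≤ @nhds _ (ternaryTopology (lexSbtw K L)) (k, l) := by
  refine le_nhds_ternaryTopology fun ⟨a, x⟩ ⟨b, y⟩ hq => ?_
  rcases eq_or_ne k a with rfl | ha <;> rcases eq_or_ne k b with rfl | hb
  · exact compl_ternIcc_lexSbtw_mem_of_fst_ne hk fun hyx =>
      hq ((preimage_prodMk_ternIcc_lexSbtw_of_lt k hyx).symm.subset (Or.inl (hl y)))
  · refine mem_of_superset (hleft b hb.symm) ?_
    rw [← compl_ternIcc_sbtw hb]
    exact fst_preimage_compl_ternIcc_subset fun h => hb h.1.symm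
  · exact absurd ((preimage_prodMk_ternIcc_lexSbtw_right ha.symm x y).symm.subset (hl y)) hq
  · exact compl_ternIcc_lexSbtw_mem_of_tendsto_fst hF ha.symm hb.symm hq

lemma le_nhds_lexSbtw_of_isTop {F : Filter (K × L)} {k : K} {l : L} (hl : IsTop l)
    (hF : Tendsto Prod.fst F (𝓝 k)) (hk : {k}ᶜ ∈ F.map Prod.fst)
    (hright : ∀ b ≠ k, cIoo k b ∈ F.map Prod.fst) :
    F ≤ @nhds _ (ternaryTopology (lexSbtw K L)) (k, l) := by
  refine le_nhds_ternaryTopology fun ⟨a, x⟩ ⟨b, y⟩ hq => ?_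
  rcases eq_or_ne k a with rfl | ha <;> rcases eq_or_ne k b with rfl | hb
  · exact compl_ternIcc_lexSbtw_mem_of_fst_ne hk fun hyx =>
      hq ((preimage_prodMk_ternIcc_lexSbtw_of_lt k hyx).symm.subset (Or.inr (hl x)))
  · exact absurd ((preimage_prodMk_ternIcc_lexSbtw_left hb x y).symm.subset (hl x)) hq
  · refine mem_of_superset (hright a ha.symm) ?_
    rw [← compl_ternIcc_sbtw ha.symm]
    exact fst_preimage_compl_ternIcc_subset fun h => ha h.1
  · exact compl_ternIcc_lexSbtw_mem_of_tendsto_fst hF ha.symm hb.symm hq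

variable [TopologicalSpace L] [OrderTopology L]

lemma continuous_prodMk_lexSbtw (k : K) :
    Continuous[_, ternaryTopology (lexSbtw K L)] (Prod.mk k) := by
  refine continuous_generateFrom_iff.2 ?_
  rintro _ ⟨⟨a, x⟩, ⟨b, y⟩, rfl⟩
  rw [preimage_compl, isOpen_compl_iff]
  rcases eq_or_ne k a with rfl | ha <;> rcases eq_or_ne k b with rfl | hb
  · rcases le_or_gt x y with hxy | hyx
    · rw [preimage_prodMk_ternIcc_lexSbtw_of_le k hxy]; exact isClosed_Icc
    · rw [preimage_prodMk_ternIcc_lexSbtw_of_lt k hyx]; exact isClosed_Iic.union isClosed_Ici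
  · rw [preimage_prodMk_ternIcc_lexSbtw_left hb]; exact isClosed_Ici
  · rw [preimage_prodMk_ternIcc_lexSbtw_right ha.symm]; exact isClosed_Iic
  · have : Prod.mk k ⁻¹' ternIcc (lexSbtw K L) (a, x) (b, y) =
        {_t | sbtw a k b ∨ (b = a ∧ y < x)} := by
      ext t; exact mem_ternIcc_lexSbtw_of_fst_ne ha hb
    rw [this]; exact isClosed_const

lemma le_nhds_lexSbtw_of_fst_eq {F : Filter (K × L)} {k : K} {l : L}
    (hk : Prod.fst ⁻¹' {k} ∈ F) (hl : Tendsto Prod.snd F (𝓝 l)) :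
    F ≤ @nhds _ (ternaryTopology (lexSbtw K L)) (k, l) := by
  have hmk := @Continuous.tendsto _ _ _ (ternaryTopology _) _ (continuous_prodMk_lexSbtw k) l
  refine tendsto_id'.1 <| (hmk.comp hl).congr' ?_
  filter_upwards [hk] with p (hp : p.1 = k)
  exact Prod.ext hp.symm rfl

lemma Ultrafilter.exists_le_nhds_lexSbtw [CompactSpace K] [CompactSpace L]
    (F : Ultrafilter (K × L)) : ∃ q, ↑F ≤ @nhds _ (ternaryTopology (lexSbtw K L)) q := by
  obtain ⟨k, hk⟩ : ∃ k, Tendsto Prod.fst (F : Filter (K × L)) (𝓝 k) :=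
    ⟨_, (F.map Prod.fst).le_nhds_lim⟩
  by_cases hfib : Prod.fst ⁻¹' {k} ∈ F
  · exact ⟨_, le_nhds_lexSbtw_of_fst_eq hfib (F.map Prod.snd).le_nhds_lim⟩
  have hne : {k}ᶜ ∈ F.map Prod.fst := Ultrafilter.compl_mem_iff_notMem.2 hfib
  have : Nonempty L := ⟨(F.nonempty_of_mem univ_mem).some.2⟩
  rcases (F.map Prod.fst).cIoo_mem_left_or_right hk hne with hleft | hright
  · obtain ⟨l, hl⟩ := isCompact_univ.exists_isLeast (univ_nonempty (α := L))
    exact ⟨_, le_nhds_lexSbtw_of_isBot (isLeast_univ_iff.1 hl) hk hne hleft⟩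
  · obtain ⟨l, hl⟩ := isCompact_univ.exists_isGreatest (univ_nonempty (α := L))
    exact ⟨_, le_nhds_lexSbtw_of_isTop (isGreatest_univ_iff.1 hl) hk hne hright⟩

end Lex

/-- If `K` is a circularly ordered set whose circular topology is compact and
`L` is a linearly ordered set whose order topology is compact, then `K × L` with the circular
topology of the lexicographic circular order is compact. -/
theorem lex_circular_product_compact
    {K L : Type*} [CircularOrder K] [LinearOrder L]
    (hK : @CompactSpace K (circularTopology K))
    (hL : @CompactSpace L (Preorder.topology L)) :
    @CompactSpace (K × L) (ternaryTopology (lexSbtw K L)) := by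
  let _ := Preorder.topology L
  have : OrderTopology L := ⟨rfl⟩
  refine @CompactSpace.mk _ (ternaryTopology _) <|
    (@isCompact_iff_ultrafilter_le_nhds _ (ternaryTopology _) _).2 fun F _ => ?_
  obtain ⟨q, hq⟩ := F.exists_le_nhds_lexSbtw
  exact ⟨q, mem_univ q, hq⟩
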